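/- Let φ_0 = 1, φ_n = 2 for n ≥ 1, with induced inner product ⟨·,·⟩_b on polynomials (corresponding to b(z) = (1+z)/2). Define Q_0 = 1 and Q_n(z) = 1 + (z−1)(a_0 + a_1 z + ⋯ + a_{n−1} z^{n−1}) where a_k = (1/√5)((1+√5)/2)^{2k+1} − (1/√5)((1−√5)/2)^{2k+1}. Then ‖Q_n‖_b² = 2 + 4·Σ_{k=0}^{n−1} a_k², and consequently ‖Q_n‖_b / ((3+√5)/2)^n → 2·5^{1/4}/5 as n → ∞. -/

import Mathlib

/-!
For `φ₀ = 1, φₙ = 2` one finds `⟨z^j, z^k⟩_b = 4 min(j, k) + 2`, so `1` and the polynomials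
`z^k (z - 1)` are pairwise orthogonal with squared norms `2` and `4`: the second difference of
`min` is a Kronecker delta. As `Q_n = 1 + Σ a_k z^k (z - 1)`, this gives `‖Q_n‖² = 2 + 4 Σ a_k²`.
The `a_k` are the Fibonacci numbers `F_{2k+1}`, and Binet's formula yields
`5 Σ_{k<n} F_{2k+1}² = F_{4n} + 2n`. Since `F_m / φ^m → 1/√5` and `(3 + √5)/2 = φ²`,
`‖Q_n‖² / φ^{4n} → 4 / (5√5)`, whose square root is `2 · 5^{1/4} / 5`.
-/

open Finset Polynomial Complex

noncomputable def dbInner (φ : ℕ → ℂ) (j k : ℕ) : ℂ :=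
  (if j = k then 1 else 0) +
    if j ≤ k then ∑ s ∈ Finset.range (j + 1), (starRingEnd ℂ) (φ s) * φ (k - j + s)
    else ∑ s ∈ Finset.range (k + 1), φ s * (starRingEnd ℂ) (φ (j - k + s))

noncomputable def polyInner (φ : ℕ → ℂ) (p q : Polynomial ℂ) : ℂ :=
  ∑ j ∈ p.support, ∑ k ∈ q.support, p.coeff j * (starRingEnd ℂ) (q.coeff k) * dbInner φ j k

/-- The odd-indexed Fibonacci numbers via Binet's formula. -/
noncomputable def fibA (k : ℕ) : ℝ :=
  (1 / Real.sqrt 5) * ((1 + Real.sqrt 5) / 2) ^ (2 * k + 1)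
    - (1 / Real.sqrt 5) * ((1 - Real.sqrt 5) / 2) ^ (2 * k + 1)

/-- Q_n = 1 + (z-1)(a_0 + a_1 z + ⋯ + a_{n-1} z^{n-1}). -/
noncomputable def QFM (n : ℕ) : Polynomial ℂ :=
  1 + (X - 1) * ∑ k ∈ Finset.range n, Polynomial.C ((fibA k : ℝ) : ℂ) * X ^ k

open scoped ComplexConjugate

section Sesquilinear

variable (φ : ℕ → ℂ)

lemma polyInner_eq_sum_of_support_subset {p q : ℂ[X]} {s t : Finset ℕ}
    (hp : p.support ⊆ s) (hq : q.support ⊆ t) :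
    polyInner φ p q = ∑ j ∈ s, ∑ k ∈ t, p.coeff j * conj (q.coeff k) * dbInner φ j k := by
  unfold polyInner
  refine sum_subset hp (fun j _ hj => ?_) |>.trans (sum_congr rfl fun j _ => ?_)
  · simp [notMem_support_iff.1 hj]
  · exact sum_subset hq fun k _ hk => by simp [notMem_support_iff.1 hk]

lemma polyInner_add_left (p p' q : ℂ[X]) :
    polyInner φ (p + p') q = polyInner φ p q + polyInner φ p' q := by
  rw [polyInner_eq_sum_of_support_subset φ support_add subset_rfl,
    polyInner_eq_sum_of_support_subset φ (subset_union_left (s₂ := p'.support)) subset_rfl,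
    polyInner_eq_sum_of_support_subset φ (subset_union_right (s₁ := p.support)) subset_rfl]
  simp only [coeff_add, add_mul, sum_add_distrib]

lemma polyInner_add_right (p q q' : ℂ[X]) :
    polyInner φ p (q + q') = polyInner φ p q + polyInner φ p q' := by
  rw [polyInner_eq_sum_of_support_subset φ subset_rfl support_add,
    polyInner_eq_sum_of_support_subset φ subset_rfl (subset_union_left (s₂ := q'.support)),
    polyInner_eq_sum_of_support_subset φ subset_rfl (subset_union_right (s₁ := q.support))]
  simp only [coeff_add, map_add, mul_add, add_mul, sum_add_distrib]

lemma polyInner_smul_left (c : ℂ) (p q : ℂ[X]) :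
    polyInner φ (c • p) q = c * polyInner φ p q := by
  rw [polyInner_eq_sum_of_support_subset φ (support_smul c p) subset_rfl,
    polyInner_eq_sum_of_support_subset φ subset_rfl subset_rfl]
  simp only [coeff_smul, smul_eq_mul, mul_sum, mul_assoc]

lemma polyInner_smul_right (c : ℂ) (p q : ℂ[X]) :
    polyInner φ p (c • q) = conj c * polyInner φ p q := by
  rw [polyInner_eq_sum_of_support_subset φ subset_rfl (support_smul c q),
    polyInner_eq_sum_of_support_subset φ subset_rfl subset_rfl]
  simp only [coeff_smul, smul_eq_mul, map_mul, mul_sum]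
  exact sum_congr rfl fun _ _ => sum_congr rfl fun _ _ => by ring

noncomputable def polyInnerₛₗ : ℂ[X] →ₗ[ℂ] ℂ[X] →ₗ⋆[ℂ] ℂ :=
  LinearMap.mk₂'ₛₗ (RingHom.id ℂ) (starRingEnd ℂ) (polyInner φ) (polyInner_add_left φ)
    (polyInner_smul_left φ) (polyInner_add_right φ) (polyInner_smul_right φ)

lemma polyInnerₛₗ_apply (p q : ℂ[X]) : polyInnerₛₗ φ p q = polyInner φ p q := rfl

lemma polyInnerₛₗ_X_pow_X_pow (j k : ℕ) : polyInnerₛₗ φ (X ^ j) (X ^ k) = dbInner φ j k := by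
  rw [polyInnerₛₗ_apply]
  simp [polyInner, support_X_pow]

end Sesquilinear

abbrev bPhi : ℕ → ℂ := fun m => if m = 0 then 1 else 2

lemma bPhi_zero : bPhi 0 = 1 := rfl

lemma bPhi_succ (m : ℕ) : bPhi (m + 1) = 2 := if_neg m.succ_ne_zero

lemma dbInner_bPhi (j k : ℕ) : dbInner bPhi j k = 4 * (min j k : ℕ) + 2 := by
  unfold dbInner
  rcases le_or_gt j k with h | h
  · have hdiag : (if j = k then 1 else 0) + bPhi (k - j) = 2 := by
      rcases h.eq_or_lt with rfl | hlt
      · norm_num [bPhi_zero]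
      · rw [if_neg hlt.ne, show k - j = k - j - 1 + 1 by omega, bPhi_succ, zero_add]
    rw [if_pos h, sum_range_succ', min_eq_left h]
    simp only [← add_assoc, bPhi_succ, bPhi_zero, add_zero, map_one, map_ofNat, one_mul, sum_const,
      card_range, nsmul_eq_mul]
    linear_combination hdiag
  · rw [if_neg (by omega), if_neg h.not_ge, sum_range_succ', min_eq_right h.le,
      show j - k = j - k - 1 + 1 by omega]
    simp only [← add_assoc, bPhi_succ, bPhi_zero, add_zero, map_ofNat, one_mul, sum_const,
      card_range, nsmul_eq_mul]
    ring

lemma polyInnerₛₗ_bPhi_X_pow_X_pow (j k : ℕ) :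
    polyInnerₛₗ bPhi (X ^ j) (X ^ k) = 4 * (min j k : ℕ) + 2 := by
  rw [polyInnerₛₗ_X_pow_X_pow, dbInner_bPhi]

lemma polyInnerₛₗ_bPhi_one_one : polyInnerₛₗ bPhi 1 1 = 2 := by
  simpa using polyInnerₛₗ_bPhi_X_pow_X_pow 0 0

-- `X ^ k * (X - 1)`, the paper's `2 p_{k+1}`.
noncomputable def stepPoly (k : ℕ) : ℂ[X] := X ^ (k + 1) - X ^ k

lemma polyInnerₛₗ_bPhi_stepPoly_one (k : ℕ) : polyInnerₛₗ bPhi (stepPoly k) 1 = 0 := by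
  rw [stepPoly, ← pow_zero X, map_sub, LinearMap.sub_apply, polyInnerₛₗ_bPhi_X_pow_X_pow,
    polyInnerₛₗ_bPhi_X_pow_X_pow]
  simp

lemma polyInnerₛₗ_bPhi_one_stepPoly (k : ℕ) : polyInnerₛₗ bPhi 1 (stepPoly k) = 0 := by
  rw [stepPoly, ← pow_zero X, map_sub, polyInnerₛₗ_bPhi_X_pow_X_pow, polyInnerₛₗ_bPhi_X_pow_X_pow]
  simp

lemma polyInnerₛₗ_bPhi_stepPoly_stepPoly (j k : ℕ) :
    polyInnerₛₗ bPhi (stepPoly j) (stepPoly k) = if j = k then 4 else 0 := by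
  have hmin : (4 * (min (j + 1) (k + 1) : ℕ) + 4 * (min j k : ℕ) : ℂ)
      = 4 * (min (j + 1) k : ℕ) + 4 * (min j (k + 1) : ℕ) + if j = k then 4 else 0 := by
    split_ifs with h
    · subst h; norm_cast; omega
    · norm_cast; omega
  simp only [stepPoly, map_sub, LinearMap.sub_apply, polyInnerₛₗ_bPhi_X_pow_X_pow]
  linear_combination hmin

lemma polyInnerₛₗ_bPhi_one_add_sum_smul_stepPoly_self (a : ℕ → ℂ) (n : ℕ) :
    polyInnerₛₗ bPhi (1 + ∑ k ∈ range n, a k • stepPoly k) (1 + ∑ k ∈ range n, a k • stepPoly k)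
      = 2 + 4 * ∑ k ∈ range n, a k * conj (a k) := by
  simp only [map_add, map_sum, map_smulₛₗ, LinearMap.add_apply, LinearMap.sum_apply,
    LinearMap.smul_apply, polyInnerₛₗ_bPhi_one_one, polyInnerₛₗ_bPhi_stepPoly_one,
    polyInnerₛₗ_bPhi_one_stepPoly, polyInnerₛₗ_bPhi_stepPoly_stepPoly]
  simp only [smul_eq_mul, RingHom.id_apply, mul_zero, zero_add, add_zero, sum_const_zero, mul_ite,
    sum_ite_eq', mul_sum]
  exact congrArg _ (sum_congr rfl fun k hk => by rw [if_pos hk]; ring)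

lemma QFM_eq_one_add_sum_smul_stepPoly (n : ℕ) :
    QFM n = 1 + ∑ k ∈ range n, ((fibA k : ℝ) : ℂ) • stepPoly k := by
  rw [QFM, mul_sum]
  congr 1
  exact sum_congr rfl fun k _ => by rw [smul_eq_C_mul, stepPoly]; ring

lemma polyInner_bPhi_QFM_self (n : ℕ) :
    polyInner bPhi (QFM n) (QFM n) = ((2 + 4 * ∑ k ∈ range n, fibA k ^ 2 : ℝ) : ℂ) := by
  rw [← polyInnerₛₗ_apply, QFM_eq_one_add_sum_smul_stepPoly,
    polyInnerₛₗ_bPhi_one_add_sum_smul_stepPoly_self]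
  push_cast
  simp only [conj_ofReal, sq]

open scoped goldenRatio
open Real

lemma five_mul_fib_odd_sq_add_fib (n : ℕ) :
    5 * Nat.fib (2 * n + 1) ^ 2 + Nat.fib (4 * n) = Nat.fib (4 * n + 4) + 2 := by
  have hφψ : φ * ψ = -1 := goldenRatio_mul_goldenConj
  have pow_four_mul {r s : ℝ} (h : r * s = -1) : r ^ (4 * n) = (r ^ (2 * n + 1)) ^ 2 * s ^ 2 := by
    rw [← mul_one (r ^ (4 * n)), ← neg_one_sq, ← h]; ring
  have pow_four_mul_add_four (r : ℝ) : r ^ (4 * n + 4) = (r ^ (2 * n + 1)) ^ 2 * r ^ 2 := by ring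
  have hxy : φ ^ (2 * n + 1) * ψ ^ (2 * n + 1) = -1 := by
    rw [← mul_pow, hφψ, pow_succ, pow_mul]; simp
  suffices h : (5 * Nat.fib (2 * n + 1) ^ 2 + Nat.fib (4 * n) : ℝ) = Nat.fib (4 * n + 4) + 2 by
    exact_mod_cast h
  rw [coe_fib_eq, coe_fib_eq, coe_fib_eq, pow_four_mul hφψ, pow_four_mul goldenConj_mul_goldenRatio,
    pow_four_mul_add_four, pow_four_mul_add_four]
  -- now a polynomial identity in `x = φ ^ (2n+1)`, `y = ψ ^ (2n+1)` and `√5`, modulo `xy = -1`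
  generalize φ ^ (2 * n + 1) = x, ψ ^ (2 * n + 1) = y at hxy ⊢
  have h5 : √5 ^ 2 = 5 := sq_sqrt (by norm_num)
  field_simp
  linear_combination (-40) * hxy - (4 * x ^ 2 + 4 * y ^ 2 + 8) * h5

lemma five_mul_sum_fib_odd_sq (n : ℕ) :
    5 * ∑ k ∈ range n, Nat.fib (2 * k + 1) ^ 2 = Nat.fib (4 * n) + 2 * n := by
  induction n with
  | zero => simp
  | succ n ih =>
    rw [sum_range_succ, mul_add, ih, show 4 * (n + 1) = 4 * n + 4 by ring]
    linarith [five_mul_fib_odd_sq_add_fib n]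

lemma tendsto_fib_div_goldenRatio_pow :
    Filter.Tendsto (fun m : ℕ => (Nat.fib m : ℝ) / φ ^ m) Filter.atTop (nhds (1 / √5)) := by
  have hratio : |ψ / φ| < 1 := by
    rw [abs_div, abs_of_pos goldenRatio_pos, div_lt_one goldenRatio_pos, abs_lt]
    constructor <;> linarith [goldenRatio_add_goldenConj, goldenConj_neg, one_lt_goldenRatio]
  have hlim := ((tendsto_pow_atTop_nhds_zero_of_abs_lt_one hratio).const_sub 1).div_const √5
  rw [sub_zero] at hlim
  refine hlim.congr fun m => ?_
  rw [coe_fib_eq, div_pow]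
  field_simp [pow_ne_zero m goldenRatio_ne_zero]

lemma fibA_eq_fib (k : ℕ) : fibA k = Nat.fib (2 * k + 1) := by
  rw [fibA, coe_fib_eq]
  ring

lemma tendsto_two_add_four_mul_sum_fibA_sq_div :
    Filter.Tendsto (fun n : ℕ => (2 + 4 * ∑ k ∈ range n, fibA k ^ 2) / (φ ^ 4) ^ n)
      Filter.atTop (nhds (4 / 5 * (1 / √5))) := by
  have hr : (0 : ℝ) ≤ (φ ^ 4)⁻¹ := by positivity
  have hr1 : (φ ^ 4)⁻¹ < 1 := inv_lt_one_of_one_lt₀ (one_lt_pow₀ one_lt_goldenRatio (by norm_num))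
  have hfib := tendsto_fib_div_goldenRatio_pow.comp
    (Filter.tendsto_id.const_mul_atTop' (show 0 < 4 by norm_num))
  have hlim := (((tendsto_pow_atTop_nhds_zero_of_lt_one hr hr1).const_mul 2).add
    (hfib.const_mul (4 / 5))).add ((tendsto_self_mul_const_pow_of_lt_one hr hr1).const_mul (8 / 5))
  rw [mul_zero, mul_zero, zero_add, add_zero] at hlim
  refine hlim.congr fun n => ?_
  have h5 : 5 * ∑ k ∈ range n, (Nat.fib (2 * k + 1) : ℝ) ^ 2 = Nat.fib (4 * n) + 2 * n := by
    exact_mod_cast five_mul_sum_fib_odd_sq n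
  simp only [fibA_eq_fib, Function.comp_apply, id, inv_pow, ← pow_mul]
  field_simp
  linear_combination (-4) * h5

lemma sqrt_four_div_five_mul_inv_sqrt_five : √(4 / 5 * (1 / √5)) = 2 * 5 ^ ((1 : ℝ) / 4) / 5 := by
  have h4 : ((5 : ℝ) ^ ((1 : ℝ) / 4)) ^ 2 = √5 := by
    rw [← rpow_natCast, ← rpow_mul (by norm_num), sqrt_eq_rpow]
    norm_num
  rw [sqrt_eq_iff_eq_sq (by positivity) (by positivity)]
  field_simp
  rw [h4]
  linear_combination (-4) * sq_sqrt (show (0 : ℝ) ≤ 5 by norm_num)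

/-- For b(z) = (1+z)/2 (φ_0 = 1, φ_n = 2 for n ≥ 1):
‖Q_n‖_b² = 2 + 4∑_{k=0}^{n-1} a_k², and consequently
‖Q_n‖_b / ((3+√5)/2)^n → 2·5^{1/4}/5 as n → ∞. -/
theorem stmt11 :
    (∀ n : ℕ, 1 ≤ n →
      polyInner (fun m => if m = 0 then 1 else 2) (QFM n) (QFM n)
        = ((2 + 4 * ∑ k ∈ Finset.range n, fibA k ^ 2 : ℝ) : ℂ)) ∧
    Filter.Tendsto
      (fun n : ℕ =>
        Real.sqrt (polyInner (fun m => if m = 0 then 1 else 2) (QFM n) (QFM n)).re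
          / ((3 + Real.sqrt 5) / 2) ^ n)
      Filter.atTop (nhds (2 * (5 : ℝ) ^ ((1 : ℝ) / 4) / 5)) := by
  refine ⟨fun n _ => polyInner_bPhi_QFM_self n, ?_⟩
  have hbase : (3 + √5) / 2 = φ ^ 2 := by rw [goldenRatio_sq]; ring
  rw [← sqrt_four_div_five_mul_inv_sqrt_five]
  refine tendsto_two_add_four_mul_sum_fibA_sq_div.sqrt.congr fun n => ?_
  rw [polyInner_bPhi_QFM_self, ofReal_re, hbase, sqrt_div' _ (by positivity), ← pow_mul, ← pow_mul,
    show 4 * n = 2 * n * 2 by ring, pow_mul, sqrt_sq (by positivity)]
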